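/- Reification is semantically faithful: for any CoreRel term r and disjoint state pairs, (st1, st2), r ---> (st1', st2') under the CoreRel big-step semantics if and only if the combined state st1_L ⊎ st2_R steps to st1'_L ⊎ st2'_R under the Imp big-step semantics of [[r]], where st_L and st_R denote the states st with variables renamed by the left and right renaming functions respectively. -/
import Mathlib


inductive AExp (V : Type) where
  | num : ℤ → AExp V
  | var : V → AExp V
  | add : AExp V → AExp V → AExp V
  | sub : AExp V → AExp V → AExp V
  | mul : AExp V → AExp V → AExp V

inductive BExp (V : Type) where
  | tru : BExp V
  | fls : BExp V
  | eq : AExp V → AExp V → BExp V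
  | lt : AExp V → AExp V → BExp V
  | not : BExp V → BExp V
  | and : BExp V → BExp V → BExp V

inductive Com (V : Type) where
  | skip : Com V
  | seq : Com V → Com V → Com V
  | assign : V → AExp V → Com V
  | whileC : BExp V → Com V → Com V
  | ifC : BExp V → Com V → Com V → Com V

abbrev State (V : Type) := V → ℤ

def aeval {V : Type} (st : State V) : AExp V → ℤ
  | .num n => n
  | .var x => st x
  | .add a b => aeval st a + aeval st b
  | .sub a b => aeval st a - aeval st b
  | .mul a b => aeval st a * aeval st b

def beval {V : Type} (st : State V) : BExp V → Bool
  | .tru => true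
  | .fls => false
  | .eq a b => decide (aeval st a = aeval st b)
  | .lt a b => decide (aeval st a < aeval st b)
  | .not b => !(beval st b)
  | .and a b => beval st a && beval st b

/-- Standard big-step semantics of Imp. -/
inductive BigStep {V : Type} [DecidableEq V] : State V → Com V → State V → Prop where
  | skip {st} : BigStep st .skip st
  | assign {st x a} : BigStep st (.assign x a) (Function.update st x (aeval st a))
  | seq {st st' st'' c1 c2} : BigStep st c1 st' → BigStep st' c2 st'' →
      BigStep st (.seq c1 c2) st''
  | ifTrue {st st' b c1 c2} : beval st b = true → BigStep st c1 st' →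
      BigStep st (.ifC b c1 c2) st'
  | ifFalse {st st' b c1 c2} : beval st b = false → BigStep st c2 st' →
      BigStep st (.ifC b c1 c2) st'
  | whileFalse {st b c} : beval st b = false → BigStep st (.whileC b c) st
  | whileTrue {st st' st'' b c} : beval st b = true → BigStep st c st' →
      BigStep st' (.whileC b c) st'' → BigStep st (.whileC b c) st''

/-- CoreRel aligned programs. -/
inductive CoreRel (V : Type) where
  | align : Com V → Com V → CoreRel V
  | seq : CoreRel V → CoreRel V → CoreRel V
  | ifR : BExp V → BExp V → CoreRel V → CoreRel V → CoreRel V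
  | whileR : BExp V → BExp V → CoreRel V → CoreRel V

/-- Big-step semantics of CoreRel over pairs of states. -/
inductive RSem {V : Type} [DecidableEq V] :
    State V × State V → CoreRel V → State V × State V → Prop where
  | align {st1 st2 st1' st2' c1 c2} :
      BigStep st1 c1 st1' → BigStep st2 c2 st2' →
      RSem (st1, st2) (.align c1 c2) (st1', st2')
  | seq {s s' s'' r1 r2} : RSem s r1 s' → RSem s' r2 s'' → RSem s (.seq r1 r2) s''
  | ifTrue {s s' b1 b2 r1 r2} : beval s.1 b1 = true → beval s.2 b2 = true →
      RSem s r1 s' → RSem s (.ifR b1 b2 r1 r2) s'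
  | ifFalse {s s' b1 b2 r1 r2} : (beval s.1 b1 = false ∨ beval s.2 b2 = false) →
      RSem s r2 s' → RSem s (.ifR b1 b2 r1 r2) s'
  | whileFalse {s b1 b2 r} : (beval s.1 b1 = false ∨ beval s.2 b2 = false) →
      RSem s (.whileR b1 b2 r) s
  | whileTrue {s s' s'' b1 b2 r} : beval s.1 b1 = true → beval s.2 b2 = true →
      RSem s r s' → RSem s' (.whileR b1 b2 r) s'' → RSem s (.whileR b1 b2 r) s''

/-- Alignment equivalence: the same relation on pairs of states. -/
def AlignEquiv {V : Type} [DecidableEq V] (r1 r2 : CoreRel V) : Prop :=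
  ∀ s s', RSem s r1 s' ↔ RSem s r2 s'

def renameA {V W : Type} (ρ : V → W) : AExp V → AExp W
  | .num n => .num n
  | .var x => .var (ρ x)
  | .add a b => .add (renameA ρ a) (renameA ρ b)
  | .sub a b => .sub (renameA ρ a) (renameA ρ b)
  | .mul a b => .mul (renameA ρ a) (renameA ρ b)

def renameB {V W : Type} (ρ : V → W) : BExp V → BExp W
  | .tru => .tru
  | .fls => .fls
  | .eq a b => .eq (renameA ρ a) (renameA ρ b)
  | .lt a b => .lt (renameA ρ a) (renameA ρ b)
  | .not b => .not (renameB ρ b)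
  | .and a b => .and (renameB ρ a) (renameB ρ b)

def renameC {V W : Type} (ρ : V → W) : Com V → Com W
  | .skip => .skip
  | .seq c1 c2 => .seq (renameC ρ c1) (renameC ρ c2)
  | .assign x a => .assign (ρ x) (renameA ρ a)
  | .whileC b c => .whileC (renameB ρ b) (renameC ρ c)
  | .ifC b c1 c2 => .ifC (renameB ρ b) (renameC ρ c1) (renameC ρ c2)

/-- Reification of CoreRel into Imp over the disjoint-sum namespace,
using the injective, disjoint-range renamings `Sum.inl` and `Sum.inr`. -/
def reify {V : Type} : CoreRel V → Com (V ⊕ V)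
  | .align c1 c2 => .seq (renameC Sum.inl c1) (renameC Sum.inr c2)
  | .seq r1 r2 => .seq (reify r1) (reify r2)
  | .ifR b1 b2 r1 r2 =>
      .ifC (.and (renameB Sum.inl b1) (renameB Sum.inr b2)) (reify r1) (reify r2)
  | .whileR b1 b2 r =>
      .whileC (.and (renameB Sum.inl b1) (renameB Sum.inr b2)) (reify r)

lemma aeval_rename {V W : Type} (ρ : V → W) (σ : State W) (a : AExp V) :
    aeval σ (renameA ρ a) = aeval (σ ∘ ρ) a := by
  induction a <;> simp [renameA, aeval, *]

lemma beval_rename {V W : Type} (ρ : V → W) (σ : State W) (b : BExp V) :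
    beval σ (renameB ρ b) = beval (σ ∘ ρ) b := by
  induction b <;> simp [renameB, beval, aeval_rename, *]

lemma update_comp {V W : Type} [DecidableEq V] [DecidableEq W] {ρ : V → W}
    (hρ : Function.Injective ρ) (σ : State W) (x : V) (v : ℤ) :
    (Function.update σ (ρ x) v) ∘ ρ = Function.update (σ ∘ ρ) x v := by
  funext y
  by_cases h : y = x
  · subst h; simp
  · simp [Function.update_apply, h, hρ.ne h]

lemma rename_inl_fwd {V : Type} [DecidableEq V] {s1 s1' : State V} {c : Com V}
    (h : BigStep s1 c s1') :
    ∀ s2 : State V, BigStep (Sum.elim s1 s2) (renameC Sum.inl c) (Sum.elim s1' s2) := by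
  induction h with
  | skip => intro s2; exact .skip
  | @assign st x a =>
      intro s2
      have h : Sum.elim (Function.update st x (aeval st a)) s2 =
          Function.update (Sum.elim st s2) (Sum.inl x)
            (aeval (Sum.elim st s2) (renameA Sum.inl a)) := by
        funext y
        cases y with
        | inl z =>
            by_cases hz : z = x
            · subst hz; simp [aeval_rename]
            · simp [Function.update_apply, hz]
        | inr z => simp [Function.update_apply]
      rw [h]
      exact BigStep.assign
  | seq h1 h2 ih1 ih2 => intro s2; exact .seq (ih1 s2) (ih2 s2)
  | ifTrue hb _ ih =>
      intro s2; exact .ifTrue (by simpa [beval_rename] using hb) (ih s2)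
  | ifFalse hb _ ih =>
      intro s2; exact .ifFalse (by simpa [beval_rename] using hb) (ih s2)
  | whileFalse hb =>
      intro s2; exact .whileFalse (by simpa [beval_rename] using hb)
  | whileTrue hb _ _ ih1 ih2 =>
      intro s2
      exact .whileTrue (by simpa [beval_rename] using hb) (ih1 s2) (ih2 s2)

lemma rename_inr_fwd {V : Type} [DecidableEq V] {s2 s2' : State V} {c : Com V}
    (h : BigStep s2 c s2') :
    ∀ s1 : State V, BigStep (Sum.elim s1 s2) (renameC Sum.inr c) (Sum.elim s1 s2') := by
  induction h with
  | skip => intro s1; exact .skip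
  | @assign st x a =>
      intro s1
      have h : Sum.elim s1 (Function.update st x (aeval st a)) =
          Function.update (Sum.elim s1 st) (Sum.inr x)
            (aeval (Sum.elim s1 st) (renameA Sum.inr a)) := by
        funext y
        cases y with
        | inl z => simp [Function.update_apply]
        | inr z =>
            by_cases hz : z = x
            · subst hz; simp [aeval_rename]
            · simp [Function.update_apply, hz]
      rw [h]
      exact BigStep.assign
  | seq h1 h2 ih1 ih2 => intro s1; exact .seq (ih1 s1) (ih2 s1)
  | ifTrue hb _ ih =>
      intro s1; exact .ifTrue (by simpa [beval_rename] using hb) (ih s1)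
  | ifFalse hb _ ih =>
      intro s1; exact .ifFalse (by simpa [beval_rename] using hb) (ih s1)
  | whileFalse hb =>
      intro s1; exact .whileFalse (by simpa [beval_rename] using hb)
  | whileTrue hb _ _ ih1 ih2 =>
      intro s1
      exact .whileTrue (by simpa [beval_rename] using hb) (ih1 s1) (ih2 s1)

lemma rename_bwd {V W : Type} [DecidableEq V] [DecidableEq W] {ρ : V → W}
    (hρ : Function.Injective ρ) {σ τ : State W} {c' : Com W}
    (h : BigStep σ c' τ) :
    ∀ c : Com V, c' = renameC ρ c →
      BigStep (σ ∘ ρ) c (τ ∘ ρ) ∧ ∀ w, (∀ v, ρ v ≠ w) → τ w = σ w := by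
  induction h with
  | skip =>
      intro c hc
      cases c <;> simp [renameC] at hc
      exact ⟨.skip, fun _ _ => rfl⟩
  | @assign st x a =>
      intro c hc
      cases c with
      | assign x' a' =>
          simp only [renameC, Com.assign.injEq] at hc
          obtain ⟨hx, ha⟩ := hc
          subst hx; subst ha
          refine ⟨?_, ?_⟩
          · rw [update_comp hρ, aeval_rename]
            exact BigStep.assign
          · intro w hw
            rw [Function.update_apply, if_neg (Ne.symm (hw x'))]
      | skip => simp [renameC] at hc
      | seq _ _ => simp [renameC] at hc
      | whileC _ _ => simp [renameC] at hc
      | ifC _ _ _ => simp [renameC] at hc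
  | seq h1 h2 ih1 ih2 =>
      intro c hc
      cases c <;> simp [renameC] at hc
      obtain ⟨hc1, hc2⟩ := hc
      obtain ⟨b1, o1⟩ := ih1 _ hc1
      obtain ⟨b2, o2⟩ := ih2 _ hc2
      exact ⟨.seq b1 b2, fun w hw => (o2 w hw).trans (o1 w hw)⟩
  | ifTrue hb _ ih =>
      intro c hc
      cases c <;> simp [renameC] at hc
      obtain ⟨hb', hc1, hc2⟩ := hc
      obtain ⟨b1, o1⟩ := ih _ hc1
      subst hb'
      exact ⟨.ifTrue (by simpa [beval_rename] using hb) b1, o1⟩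
  | ifFalse hb _ ih =>
      intro c hc
      cases c <;> simp [renameC] at hc
      obtain ⟨hb', hc1, hc2⟩ := hc
      obtain ⟨b2, o2⟩ := ih _ hc2
      subst hb'
      exact ⟨.ifFalse (by simpa [beval_rename] using hb) b2, o2⟩
  | whileFalse hb =>
      intro c hc
      cases c <;> simp [renameC] at hc
      obtain ⟨hb', hc1⟩ := hc
      subst hb'
      exact ⟨.whileFalse (by simpa [beval_rename] using hb), fun _ _ => rfl⟩
  | whileTrue hb _ _ ih1 ih2 =>
      intro c hc
      cases c <;> simp [renameC] at hc
      obtain ⟨hb', hc1⟩ := hc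
      obtain ⟨b1, o1⟩ := ih1 _ hc1
      subst hb'; subst hc1
      obtain ⟨b2, o2⟩ := ih2 (.whileC _ _) rfl
      exact ⟨.whileTrue (by simpa [beval_rename] using hb) b1 b2,
        fun w hw => (o2 w hw).trans (o1 w hw)⟩

lemma reify_fwd {V : Type} [DecidableEq V] {s s' : State V × State V} {r : CoreRel V}
    (h : RSem s r s') :
    BigStep (Sum.elim s.1 s.2) (reify r) (Sum.elim s'.1 s'.2) := by
  induction h with
  | align h1 h2 =>
      exact .seq (rename_inl_fwd h1 _) (rename_inr_fwd h2 _)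
  | seq h1 h2 ih1 ih2 => exact .seq ih1 ih2
  | ifTrue hb1 hb2 _ ih =>
      exact .ifTrue (by simp [beval, beval_rename, hb1, hb2]) ih
  | ifFalse hb _ ih =>
      refine .ifFalse ?_ ih
      rcases hb with hb | hb <;> simp [beval, beval_rename, hb]
  | whileFalse hb =>
      refine .whileFalse ?_
      rcases hb with hb | hb <;> simp [beval, beval_rename, hb]
  | whileTrue hb1 hb2 _ _ ih1 ih2 =>
      exact .whileTrue (by simp [beval, beval_rename, hb1, hb2]) ih1 ih2

lemma reify_bwd {V : Type} [DecidableEq V] {σ τ : State (V ⊕ V)} {c : Com (V ⊕ V)}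
    (h : BigStep σ c τ) :
    ∀ r : CoreRel V, c = reify r →
      RSem (σ ∘ Sum.inl, σ ∘ Sum.inr) r (τ ∘ Sum.inl, τ ∘ Sum.inr) := by
  induction h with
  | skip => intro r hr; cases r <;> simp [reify] at hr
  | assign => intro r hr; cases r <;> simp [reify] at hr
  | @seq σ0 σmid τ0 c1' c2' h1 h2 ih1 ih2 =>
      intro r hr
      cases r with
      | align c1 c2 =>
          simp only [reify, Com.seq.injEq] at hr
          obtain ⟨b1, o1⟩ := rename_bwd Sum.inl_injective h1 c1 hr.1
          obtain ⟨b2, o2⟩ := rename_bwd Sum.inr_injective h2 c2 hr.2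
          have hmid : σ0 ∘ Sum.inr = σmid ∘ Sum.inr := by
            funext y; exact (o1 (Sum.inr y) (fun v => Sum.inl_ne_inr)).symm
          have hmid2 : τ0 ∘ Sum.inl = σmid ∘ Sum.inl := by
            funext y; exact o2 (Sum.inl y) (fun v => Sum.inr_ne_inl)
          rw [hmid, hmid2]
          exact .align b1 b2
      | seq r1 r2 =>
          simp only [reify, Com.seq.injEq] at hr
          exact .seq (ih1 r1 hr.1) (ih2 r2 hr.2)
      | ifR b1 b2 r1 r2 => simp [reify] at hr
      | whileR b1 b2 r0 => simp [reify] at hr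
  | ifTrue hb _ ih =>
      intro r hr
      cases r with
      | align c1 c2 => simp [reify] at hr
      | seq r1 r2 => simp [reify] at hr
      | whileR b1 b2 r0 => simp [reify] at hr
      | ifR b1 b2 r1 r2 =>
        simp only [reify, Com.ifC.injEq] at hr
        obtain ⟨hbeq, h1, h2⟩ := hr
        subst hbeq
        rw [beval, Bool.and_eq_true, beval_rename, beval_rename] at hb
        exact .ifTrue hb.1 hb.2 (ih r1 h1)
  | ifFalse hb _ ih =>
      intro r hr
      cases r with
      | align c1 c2 => simp [reify] at hr
      | seq r1 r2 => simp [reify] at hr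
      | whileR b1 b2 r0 => simp [reify] at hr
      | ifR b1 b2 r1 r2 =>
        simp only [reify, Com.ifC.injEq] at hr
        obtain ⟨hbeq, h1, h2⟩ := hr
        subst hbeq
        rw [beval, Bool.and_eq_false_iff, beval_rename, beval_rename] at hb
        exact .ifFalse hb (ih r2 h2)
  | whileFalse hb =>
      intro r hr
      cases r with
      | align c1 c2 => simp [reify] at hr
      | seq r1 r2 => simp [reify] at hr
      | ifR b1 b2 r1 r2 => simp [reify] at hr
      | whileR b1 b2 r0 =>
        simp only [reify, Com.whileC.injEq] at hr
        obtain ⟨hbeq, h1⟩ := hr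
        subst hbeq
        rw [beval, Bool.and_eq_false_iff, beval_rename, beval_rename] at hb
        exact .whileFalse hb
  | whileTrue hb _ _ ih1 ih2 =>
      intro r hr
      cases r with
      | align c1 c2 => simp [reify] at hr
      | seq r1 r2 => simp [reify] at hr
      | ifR b1 b2 r1 r2 => simp [reify] at hr
      | whileR b1 b2 r0 =>
        simp only [reify, Com.whileC.injEq] at hr
        obtain ⟨hbeq, h1⟩ := hr
        have hb' := hb
        rw [hbeq, beval, Bool.and_eq_true, beval_rename, beval_rename] at hb'
        exact .whileTrue hb'.1 hb'.2 (ih1 r0 h1) (ih2 _ (by rw [reify, ← hbeq, ← h1]))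

theorem reify_faithful {V : Type} [DecidableEq V] (r : CoreRel V)
    (st1 st2 st1' st2' : State V) :
    RSem (st1, st2) r (st1', st2') ↔
      BigStep (Sum.elim st1 st2) (reify r) (Sum.elim st1' st2') := by
  constructor
  · intro h; exact reify_fwd h
  · intro h
    have := reify_bwd h r rfl
    have e1 : Sum.elim st1 st2 ∘ Sum.inl = st1 := rfl
    have e2 : Sum.elim st1 st2 ∘ Sum.inr = st2 := rfl
    have e3 : Sum.elim st1' st2' ∘ Sum.inl = st1' := rfl
    have e4 : Sum.elim st1' st2' ∘ Sum.inr = st2' := rfl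
    rwa [e1, e2, e3, e4] at this
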